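/- Let $0 < p < q \leq \infty$. Then there exists a doubly indexed sequence $(\lambda_{j,k})_{j,k\geq 0}$ of nonnegative reals such that $\big(\sum_{j\geq 0}\big(\sum_{k\geq 0}\lambda_{j,k}^p\big)^{q/p}\big)^{1/q} < \infty$ (with the supremum over $j$ of the inner sums if $q = \infty$), and $\sup_{j\geq 0} 2^{j/p}\lambda_{j,\lfloor 2^j x\rfloor} = \infty$ for all $x \in [1,2)$. -/

import Mathlib

/-!
Row `j` of `λ`, with `m = ⌊log₂ j⌋`, equals `(m / 2^j)^(1/p)` on the block of the `2^(j-m)`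
indices `k` with `⌊k / 2^(j-m)⌋ = j` and vanishes elsewhere, so its `ℓ^p` mass is `m / 2^m ≤ 1`.
At most `2^(m+1)` rows share the same `m`, so the `b_{p,q}` sum is bounded by
`∑ₘ 2^(m+1) (m / 2^m)^(q/p)`, finite because `q/p > 1`. For `x ∈ [1,2)` and `j = ⌊2^m x⌋` one has
`⌊log₂ j⌋ = m` and `⌊2^j x⌋` lies in the block of row `j`, so `2^(j/p) λ_{j,⌊2^j x⌋} = m^(1/p)`.
-/
open scoped ENNReal

theorem Nat.encard_setOf_div_eq {d : ℕ} (hd : d ≠ 0) (j : ℕ) :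
    {k : ℕ | k / d = j}.encard = d := by
  have hset : {k : ℕ | k / d = j} = Finset.Ico (j * d) (j * d + d) := by
    ext k
    simp only [Set.mem_ofPred_eq, Finset.coe_Ico, Set.mem_Ico,
      Nat.div_eq_iff (Nat.pos_of_ne_zero hd)]
    omega
  rw [hset, Set.encard_coe_eq_coe_finsetCard, Nat.card_Ico, Nat.add_sub_cancel_left]

theorem ENNReal.tsum_comp_eq_tsum_encard_mul {β γ : Type*} (g : β → γ) (T : γ → ℝ≥0∞) :
    ∑' b, T (g b) = ∑' c, (g ⁻¹' {c}).encard * T c := by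
  rw [← ENNReal.tsum_fiberwise _ g]
  refine tsum_congr fun c => ?_
  rw [← ENNReal.tsum_set_const]
  exact tsum_congr fun b => by rw [b.2]

theorem Nat.encard_log_preimage_le {b : ℕ} (hb : 1 < b) (m : ℕ) :
    (Nat.log b ⁻¹' {m}).encard ≤ b ^ (m + 1) := by
  calc (Nat.log b ⁻¹' {m}).encard ≤ (Finset.range (b ^ (m + 1)) : Set ℕ).encard := by
        refine Set.encard_le_encard fun n hn => ?_
        simp only [Set.mem_preimage, Set.mem_singleton_iff] at hn
        simpa [← hn] using Nat.lt_pow_succ_log_self hb n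
    _ = b ^ (m + 1) := by rw [Set.encard_coe_eq_coe_finsetCard, Finset.card_range]; push_cast; rfl

theorem ENNReal.tsum_comp_log_le {b : ℕ} (hb : 1 < b) (T : ℕ → ℝ≥0∞) :
    ∑' n, T (Nat.log b n) ≤ ∑' m, (b : ℝ≥0∞) ^ (m + 1) * T m := by
  rw [ENNReal.tsum_comp_eq_tsum_encard_mul]
  gcongr with m
  exact_mod_cast Nat.encard_log_preimage_le hb m

theorem Real.natCast_rpow_le_pow_ceil (n : ℕ) (r : ℝ) : (n : ℝ) ^ r ≤ (n : ℝ) ^ ⌈r⌉₊ := by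
  rcases Nat.eq_zero_or_pos n with rfl | hn
  · rcases lt_trichotomy r 0 with hr | rfl | hr
    · simp [Real.zero_rpow hr.ne, Nat.ceil_eq_zero.2 hr.le]
    · simp
    · simp [Real.zero_rpow hr.ne', (Nat.ceil_pos.2 hr).ne']
  · rw [← Real.rpow_natCast]
    exact Real.rpow_le_rpow_of_exponent_le (by exact_mod_cast hn) (Nat.le_ceil r)

theorem summable_rpow_mul_geometric_of_norm_lt_one (r : ℝ) {x : ℝ} (hx : ‖x‖ < 1) :
    Summable fun n : ℕ => (n : ℝ) ^ r * x ^ n := by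
  refine (summable_pow_mul_geometric_of_norm_lt_one ⌈r⌉₊ (norm_norm x ▸ hx)).of_norm_bounded
    fun n => ?_
  rw [norm_mul, norm_pow, Real.norm_of_nonneg (by positivity)]
  gcongr
  exact Real.natCast_rpow_le_pow_ceil n r

theorem summable_two_pow_mul_div_two_pow_rpow {r : ℝ} (hr : 1 < r) :
    Summable fun m : ℕ => (2 : ℝ) ^ m * ((m : ℝ) / 2 ^ m) ^ r := by
  have h2r : (2 : ℝ) < 2 ^ r := by
    simpa using Real.rpow_lt_rpow_of_exponent_lt one_lt_two hr
  have hx : ‖2 / (2 : ℝ) ^ r‖ < 1 := by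
    rw [Real.norm_of_nonneg (by positivity), div_lt_one (by positivity)]
    exact h2r
  refine (summable_rpow_mul_geometric_of_norm_lt_one r hx).congr fun m => ?_
  rw [Real.div_rpow (by positivity) (by positivity), ← Real.rpow_pow_comm two_pos.le, div_pow]
  field_simp

theorem Nat.floor_pow_mul_div_pow {b : ℕ} (hb : b ≠ 0) (x : ℝ) {m n : ℕ} (hmn : m ≤ n) :
    ⌊(b : ℝ) ^ n * x⌋₊ / b ^ (n - m) = ⌊(b : ℝ) ^ m * x⌋₊ := by
  rw [← Nat.floor_div_natCast, ← pow_sub_mul_pow (b : ℝ) hmn]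
  push_cast
  field_simp

theorem Nat.log_two_floor_two_pow_mul {x : ℝ} (hx : x ∈ Set.Ico (1 : ℝ) 2) (m : ℕ) :
    Nat.log 2 ⌊(2 : ℝ) ^ m * x⌋₊ = m := by
  have hlow : 2 ^ m ≤ ⌊(2 : ℝ) ^ m * x⌋₊ :=
    Nat.le_floor (by push_cast; nlinarith [hx.1, pow_pos (two_pos (α := ℝ)) m])
  have hupp : ⌊(2 : ℝ) ^ m * x⌋₊ < 2 ^ (m + 1) :=
    (Nat.floor_lt (by nlinarith [hx.1, pow_pos (two_pos (α := ℝ)) m])).2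
      (by push_cast; rw [pow_succ]; nlinarith [hx.2, pow_pos (two_pos (α := ℝ)) m])
  exact (Nat.log_eq_iff (.inr ⟨one_lt_two, (Nat.two_pow_pos m).trans_le hlow |>.ne'⟩)).2
    ⟨hlow, hupp⟩

noncomputable def orbitSeq (p : ℝ) (j k : ℕ) : ℝ :=
  if k / 2 ^ (j - Nat.log 2 j) = j then ((Nat.log 2 j : ℝ) / 2 ^ j) ^ p⁻¹ else 0

theorem orbitSeq_nonneg (p : ℝ) (j k : ℕ) : 0 ≤ orbitSeq p j k := by
  unfold orbitSeq
  split_ifs <;> positivity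

theorem tsum_orbitSeq_rpow {p : ℝ} (hp : p ≠ 0) (j : ℕ) :
    ∑' k, ENNReal.ofReal (orbitSeq p j k ^ p) =
      ENNReal.ofReal ((Nat.log 2 j : ℝ) / 2 ^ Nat.log 2 j) := by
  set m := Nat.log 2 j
  have hrow : ∀ k, ENNReal.ofReal (orbitSeq p j k ^ p) =
      {k | k / 2 ^ (j - m) = j}.indicator (fun _ => ENNReal.ofReal ((m : ℝ) / 2 ^ j)) k := by
    intro k
    simp only [orbitSeq, Set.indicator, Set.mem_ofPred_eq]
    split_ifs
    · rw [Real.rpow_inv_rpow (by positivity) hp]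
    · rw [Real.zero_rpow hp, ENNReal.ofReal_zero]
  have hpow : (2 : ℝ) ^ (j - m) * 2 ^ m = 2 ^ j := pow_sub_mul_pow 2 (Nat.log_le_self 2 j)
  rw [tsum_congr hrow, ← tsum_subtype, ENNReal.tsum_set_const,
    Nat.encard_setOf_div_eq (pow_ne_zero _ two_ne_zero), ENat.toENNReal_coe,
    ← ENNReal.ofReal_natCast, ← ENNReal.ofReal_mul (by positivity), ← hpow]
  push_cast
  congr 1
  field_simp

theorem two_rpow_mul_orbitSeq_floor (p : ℝ) {x : ℝ} (hx : x ∈ Set.Ico (1 : ℝ) 2) (m : ℕ) :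
    (2 : ℝ) ^ ((⌊(2 : ℝ) ^ m * x⌋₊ : ℝ) / p) *
      orbitSeq p ⌊(2 : ℝ) ^ m * x⌋₊ ⌊(2 : ℝ) ^ ⌊(2 : ℝ) ^ m * x⌋₊ * x⌋₊ = (m : ℝ) ^ p⁻¹ := by
  set j := ⌊(2 : ℝ) ^ m * x⌋₊ with hj
  have hlog : Nat.log 2 j = m := Nat.log_two_floor_two_pow_mul hx m
  have hmj : m ≤ j := hlog ▸ Nat.log_le_self 2 j
  have hblock : ⌊(2 : ℝ) ^ j * x⌋₊ / 2 ^ (j - m) = j := by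
    simpa [← hj] using Nat.floor_pow_mul_div_pow two_ne_zero x hmj
  rw [orbitSeq, hlog, if_pos hblock, div_eq_mul_inv (j : ℝ), Real.rpow_mul two_pos.le,
    Real.rpow_natCast, ← Real.mul_rpow (by positivity) (by positivity)]
  field_simp

theorem iSup_tsum_orbitSeq_rpow_le_one {p : ℝ} (hp : p ≠ 0) :
    ⨆ j, ∑' k, ENNReal.ofReal (orbitSeq p j k ^ p) ≤ 1 := by
  refine iSup_le fun j => ?_
  rw [tsum_orbitSeq_rpow hp, ENNReal.ofReal_le_one, div_le_one (by positivity)]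
  exact_mod_cast (Nat.lt_two_pow_self).le

theorem tsum_two_pow_succ_mul_ofReal_div_rpow_lt_top {r : ℝ} (hr : 1 < r) :
    ∑' m : ℕ, ((2 : ℕ) : ℝ≥0∞) ^ (m + 1) * ENNReal.ofReal ((m : ℝ) / 2 ^ m) ^ r < ∞ := by
  have hterm : ∀ m : ℕ, ((2 : ℕ) : ℝ≥0∞) ^ (m + 1) * ENNReal.ofReal ((m : ℝ) / 2 ^ m) ^ r =
      2 * ENNReal.ofReal ((2 : ℝ) ^ m * ((m : ℝ) / 2 ^ m) ^ r) := by
    intro m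
    rw [ENNReal.ofReal_rpow_of_nonneg (by positivity) (by linarith),
      ENNReal.ofReal_mul (by positivity), ENNReal.ofReal_pow zero_le_two, pow_succ]
    simp only [Nat.cast_ofNat, ENNReal.ofReal_ofNat]
    ring
  rw [tsum_congr hterm, ENNReal.tsum_mul_left,
    ← ENNReal.ofReal_tsum_of_nonneg (fun m => by positivity)
      (summable_two_pow_mul_div_two_pow_rpow hr)]
  exact ENNReal.mul_lt_top ENNReal.ofNat_lt_top ENNReal.ofReal_lt_top

theorem tsum_tsum_orbitSeq_rpow_rpow_lt_top {p r : ℝ} (hp : p ≠ 0) (hr : 1 < r) :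
    ∑' j, (∑' k, ENNReal.ofReal (orbitSeq p j k ^ p)) ^ r < ∞ := by
  simp_rw [tsum_orbitSeq_rpow hp]
  exact (ENNReal.tsum_comp_log_le one_lt_two
    (fun m => ENNReal.ofReal ((m : ℝ) / 2 ^ m) ^ r)).trans_lt
      (tsum_two_pow_succ_mul_ofReal_div_rpow_lt_top hr)

/-- For `0 < p < q ≤ ∞` there is a nonnegative double sequence `(λ_{j,k})` in the Besov
sequence space `b_{p,q}` (i.e. `(∑_j (∑_k λ_{j,k}^p)^{q/p})^{1/q} < ∞`, sup over `j` if
`q = ∞`) such that `sup_{j≥0} 2^{j/p} λ_{j,⌊2^j x⌋} = ∞` for every `x ∈ [1,2)`. -/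
theorem exists_bpq_orbit_unbounded (p : ℝ) (q : ℝ≥0∞) (hp : 0 < p)
    (hpq : ENNReal.ofReal p < q) :
    ∃ lam : ℕ → ℕ → ℝ, (∀ j k, 0 ≤ lam j k) ∧
      (if q = ⊤ then
          ⨆ j : ℕ, ∑' k : ℕ, ENNReal.ofReal (lam j k ^ p)
        else
          ∑' j : ℕ, (∑' k : ℕ, ENNReal.ofReal (lam j k ^ p)) ^ (q.toReal / p)) < ⊤ ∧
      ∀ x ∈ Set.Ico (1 : ℝ) 2, ∀ M : ℝ,
        ∃ j : ℕ, M < (2 : ℝ) ^ ((j : ℝ) / p) * lam j (Nat.floor ((2 : ℝ) ^ j * x)) := by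
  refine ⟨orbitSeq p, orbitSeq_nonneg p, ?_, fun x hx M => ?_⟩
  · split_ifs with hq
    · exact (iSup_tsum_orbitSeq_rpow_le_one hp.ne').trans_lt ENNReal.one_lt_top
    · have hpq' : p < q.toReal := (ENNReal.ofReal_lt_iff_lt_toReal hp.le hq).1 hpq
      exact tsum_tsum_orbitSeq_rpow_rpow_lt_top hp.ne' ((one_lt_div hp).2 hpq')
  · obtain ⟨m, hm⟩ := (((tendsto_rpow_atTop (inv_pos.2 hp)).comp
      tendsto_natCast_atTop_atTop).eventually_gt_atTop M).exists
    exact ⟨_, by rwa [two_rpow_mul_orbitSeq_floor p hx m]⟩
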